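/- Consider M queues with q_m(t+1) = q_m(t) + a_m(t) − μ + u_m(t), u_m(t) ≥ 0, 0 ≤ u_m(t) ≤ μ, where in each slot an arrival batch a(t) of mean λ and a(t) ≤ A a.s. is routed entirely to the shorter of two uniformly random distinct queues (power-of-two-choices). Let q_max, q_min denote the largest and smallest coordinates of q(t). Then the conditional expected routed workload satisfies E[Σ_m q_m(t)a_m(t) | q(t) = q] ≤ (λ/M)·Σ_m q_m − (λ/(2·C(M,2)))·(q_max − q_min), where C(M,2) = M(M−1)/2. -/

import Mathlib

/-!
Writing `min a b = (a + b - |a - b|) / 2` and summing over the pairs `i < j` turns the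
expected routed workload into `(M - 1) Σ q / 2` minus half the total pairwise spread
`Σ_{i<j} |q_i - q_j|`; the latter dominates the single term `q_max - q_min` of the pair
formed by an argmin and an argmax.
-/

open Finset

section LtPairs

variable {ι : Type*} [Fintype ι] [LinearOrder ι]

theorem sum_lt_pairs_add {R : Type*} [CommRing R] (f : ι → R) :
    ∑ p ∈ univ.filter (fun p : ι × ι => p.1 < p.2), (f p.1 + f p.2) =
      ((Fintype.card ι : R) - 1) * ∑ i, f i := by
  have hswap : ∑ p ∈ univ.filter (fun p : ι × ι => p.1 < p.2), f p.2 =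
      ∑ p ∈ univ.filter (fun p : ι × ι => p.2 < p.1), f p.1 :=
    sum_equiv (Equiv.prodComm ι ι) (by simp) (by simp)
  have hsplit : ∑ p ∈ univ.filter (fun p : ι × ι => p.1 ≠ p.2), f p.1 =
      ∑ p ∈ univ.filter (fun p : ι × ι => p.1 < p.2), f p.1 +
        ∑ p ∈ univ.filter (fun p : ι × ι => p.2 < p.1), f p.1 := by
    rw [← sum_union (disjoint_filter.2 fun p _ h => lt_asymm h), ← filter_or]
    simp only [ne_iff_lt_or_gt]
  have hne : ∑ p ∈ univ.filter (fun p : ι × ι => p.1 ≠ p.2), f p.1 =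
      ((Fintype.card ι : R) - 1) * ∑ i, f i := by
    rw [sum_filter, Fintype.sum_prod_type, mul_sum]
    refine sum_congr rfl fun i _ => ?_
    simp [sum_ite, filter_ne, card_univ, Nat.cast_pred (Fintype.card_pos_iff.2 ⟨i⟩), sub_mul]
  rw [sum_add_distrib, hswap, ← hsplit, hne]

theorem sup'_sub_inf'_le_sum_lt_pairs_abs_sub {α : Type*} [AddCommGroup α] [LinearOrder α]
    [IsOrderedAddMonoid α] [Nonempty ι] (f : ι → α) :
    univ.sup' univ_nonempty f - univ.inf' univ_nonempty f ≤
      ∑ p ∈ univ.filter (fun p : ι × ι => p.1 < p.2), |f p.1 - f p.2| := by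
  obtain ⟨i, -, hi⟩ := exists_mem_eq_inf' univ_nonempty f
  obtain ⟨j, -, hj⟩ := exists_mem_eq_sup' univ_nonempty f
  have hnonneg : ∀ p ∈ univ.filter (fun p : ι × ι => p.1 < p.2), 0 ≤ |f p.1 - f p.2| :=
    fun p _ => abs_nonneg _
  rw [hi, hj]
  rcases lt_trichotomy i j with h | rfl | h
  · exact (le_abs_self _).trans_eq (abs_sub_comm _ _) |>.trans
      (single_le_sum hnonneg (a := (i, j)) (by simpa using h))
  · simpa using sum_nonneg hnonneg
  · exact (le_abs_self _).trans (single_le_sum hnonneg (a := (j, i)) (by simpa using h))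

variable {K : Type*} [Field K] [LinearOrder K] [IsStrictOrderedRing K]

theorem min_eq_add_sub_abs_sub_div_two (a b : K) : min a b = (a + b - |a - b|) / 2 := by
  linarith [min_add_max a b, max_sub_min_eq_abs' a b]

theorem sum_lt_pairs_min_le [Nonempty ι] (f : ι → K) :
    ∑ p ∈ univ.filter (fun p : ι × ι => p.1 < p.2), min (f p.1) (f p.2) ≤
      (((Fintype.card ι : K) - 1) * ∑ i, f i -
        (univ.sup' univ_nonempty f - univ.inf' univ_nonempty f)) / 2 :=
  calc ∑ p ∈ univ.filter (fun p : ι × ι => p.1 < p.2), min (f p.1) (f p.2)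
      = (((Fintype.card ι : K) - 1) * ∑ i, f i -
          ∑ p ∈ univ.filter (fun p : ι × ι => p.1 < p.2), |f p.1 - f p.2|) / 2 := by
        simp only [min_eq_add_sub_abs_sub_div_two, ← sum_div, sum_sub_distrib, sum_lt_pairs_add]
    _ ≤ _ := by gcongr; exact sup'_sub_inf'_le_sum_lt_pairs_abs_sub f

end LtPairs

/-- Power-of-two-choices drift estimate: averaging over the `C(M,2)` equally
likely pairs, the conditional expected routed workload
`E[Σ_m q_m a_m | q] = (λ / C(M,2)) Σ_{i<j} min(q_i, q_j)` satisfies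
`≤ (λ/M) Σ_m q_m − (λ/(2 C(M,2))) (q_max − q_min)`. -/
theorem power_of_two_choices_routing_bound
    (M : ℕ) (hM : 2 ≤ M) (lam : ℝ) (hlam : 0 ≤ lam)
    (q : Fin M → ℝ) :
    haveI : Nonempty (Fin M) := Fin.pos_iff_nonempty.mp (by omega)
    (1 / ((M * (M - 1) : ℝ) / 2)) *
        ∑ p ∈ Finset.univ.filter (fun p : Fin M × Fin M => p.1 < p.2),
          lam * min (q p.1) (q p.2) ≤
      (lam / M) * ∑ m, q m -
        (lam / (2 * ((M * (M - 1) : ℝ) / 2))) *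
          (Finset.univ.sup' Finset.univ_nonempty q -
            Finset.univ.inf' Finset.univ_nonempty q) := by
  have : Nonempty (Fin M) := Fin.pos_iff_nonempty.mp (by omega)
  have hM2 : (2 : ℝ) ≤ M := by exact_mod_cast hM
  have hM0 : (M : ℝ) ≠ 0 := by linarith
  have hM1 : (M : ℝ) - 1 ≠ 0 := by linarith
  have hpairs : 0 < ((M * (M - 1) : ℝ) / 2) := by nlinarith
  rw [← mul_sum]
  calc _ ≤ 1 / ((M * (M - 1) : ℝ) / 2) * (lam * ((((M : ℝ) - 1) * ∑ m, q m -
          (univ.sup' univ_nonempty q - univ.inf' univ_nonempty q)) / 2)) := by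
        gcongr
        simpa using sum_lt_pairs_min_le q
    _ = _ := by field_simp
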